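/- arXiv:1204.5828 — 3 statements merged into one kernel-verified Lean document; each statement's English description precedes it below -/
import Mathlib

section
/- Let γ : [0,1] → ℝ² be a curve of finite length L whose endpoints a = γ(0) and b = γ(1) have equal y-coordinates. Let w and h be the width and height of the axis-aligned bounding box of the image of γ. Then (2w − |a − b|)² + 4h² ≤ L², where |a − b| is the Euclidean distance between the endpoints. In particular, since |a − b| ≤ w, one has w² + 4h² ≤ L². -/
/-!
Pick parameters `p, q` where the `x`-coordinate of `γ` attains its minimum and maximum,
and `p', q'` where the `y`-coordinate does, and let `S = {0, 1, p, q, p', q'}`. Along `S`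
the `x`-coordinate must travel from `x(0)` to both extremes and on to `x(1)`, a total of
at least `2w − |x(1) − x(0)| = 2w − |a − b|`; the `y`-coordinate returns to its starting
height and so travels at least `2h`. The polygon inscribed in `γ` at the points of `S` has
length at most `L`, and by Minkowski's inequality its length is at least the Euclidean norm
of the vector of the two coordinate variations along `S`.
-/

open Set

namespace eVariationOn

variable {α E : Type*} [LinearOrder α]

theorem insert_of_isGreatest [PseudoEMetricSpace E] (f : α → E) {s : Set α} {m a : α}
    (hm : IsGreatest s m) (hma : m ≤ a) :
    eVariationOn f (insert a s) = eVariationOn f s + edist (f m) (f a) := by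
  rw [← union_singleton, union' f hm isLeast_singleton hma,
    eVariationOn.subsingleton f subsingleton_singleton, add_zero]

theorem toReal_insert_of_isGreatest [PseudoMetricSpace E] {f : α → E} {s : Set α}
    (hf : BoundedVariationOn f s) {m a : α} (hm : IsGreatest s m) (hma : m ≤ a) :
    (eVariationOn f (insert a s)).toReal = (eVariationOn f s).toReal + dist (f m) (f a) := by
  rw [insert_of_isGreatest f hm hma, ENNReal.toReal_add hf (edist_ne_top _ _), ← dist_edist]

theorem edist_add_edist_add_edist_le [PseudoEMetricSpace E] (f : α → E) {s : Set α}
    {a b c d : α} (ha : a ∈ s) (hb : b ∈ s) (hc : c ∈ s) (hd : d ∈ s)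
    (hab : a ≤ b) (hbc : b ≤ c) (hcd : c ≤ d) :
    edist (f a) (f b) + edist (f b) (f c) + edist (f c) (f d) ≤ eVariationOn f s :=
  calc _ ≤ eVariationOn f (s ∩ Icc a b) + eVariationOn f (s ∩ Icc b c)
        + eVariationOn f (s ∩ Icc c d) := by
        gcongr <;> apply edist_le <;> simp [*]
    _ = eVariationOn f (s ∩ Icc a d) := by
        rw [Icc_add_Icc f hab hbc hb, Icc_add_Icc f (hab.trans hbc) hcd hc]
    _ ≤ eVariationOn f s := mono f inter_subset_left

end eVariationOn

namespace BoundedVariationOn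

variable {α E : Type*} [LinearOrder α]

theorem dist_add_dist_add_dist_le [PseudoMetricSpace E] {f : α → E} {s : Set α}
    (hf : BoundedVariationOn f s) {a b c d : α} (ha : a ∈ s) (hb : b ∈ s) (hc : c ∈ s)
    (hd : d ∈ s) (hab : a ≤ b) (hbc : b ≤ c) (hcd : c ≤ d) :
    dist (f a) (f b) + dist (f b) (f c) + dist (f c) (f d) ≤ (eVariationOn f s).toReal := by
  rw [← ENNReal.ofReal_le_ofReal_iff ENNReal.toReal_nonneg, ENNReal.ofReal_toReal hf,
    ENNReal.ofReal_add (by positivity) dist_nonneg, ENNReal.ofReal_add dist_nonneg dist_nonneg,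
    ← edist_dist, ← edist_dist, ← edist_dist]
  exact eVariationOn.edist_add_edist_add_edist_le f ha hb hc hd hab hbc hcd

theorem two_mul_sub_sub_dist_le {f : α → ℝ} {s : Set α} (hf : BoundedVariationOn f s)
    {a b p q : α} (ha : a ∈ s) (hb : b ∈ s) (hp : p ∈ s) (hq : q ∈ s)
    (hap : a ≤ p) (hpb : p ≤ b) (haq : a ≤ q) (hqb : q ≤ b) :
    2 * (f q - f p) - dist (f a) (f b) ≤ (eVariationOn f s).toReal := by
  rcases le_total p q with hpq | hqp
  · have := hf.dist_add_dist_add_dist_le ha hp hq hb hap hpq hqb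
    simp only [Real.dist_eq] at this ⊢
    linarith [le_abs_self (f a - f p), neg_abs_le (f p - f q), le_abs_self (f q - f b),
      neg_abs_le (f a - f b)]
  · have := hf.dist_add_dist_add_dist_le ha hq hp hb haq hqp hpb
    simp only [Real.dist_eq] at this ⊢
    linarith [neg_abs_le (f a - f q), le_abs_self (f q - f p), neg_abs_le (f p - f b),
      le_abs_self (f a - f b)]

end BoundedVariationOn

section CoordVariation

variable {α ι : Type*} [LinearOrder α] [Fintype ι]

/-- A coordinate of infinite variation contributes the junk value `0`. -/
noncomputable def coordVariation (γ : α → EuclideanSpace ℝ ι) (s : Set α) :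
    EuclideanSpace ℝ ι :=
  WithLp.toLp 2 fun i => (eVariationOn (fun t => γ t i) s).toReal

theorem norm_toLp_dist_apply (u v : EuclideanSpace ℝ ι) :
    ‖WithLp.toLp 2 fun i => dist (u i) (v i)‖ = dist u v := by
  simp [EuclideanSpace.norm_eq, EuclideanSpace.dist_eq]

/-- Minkowski's inequality, segment by segment. -/
theorem norm_coordVariation_le (γ : α → EuclideanSpace ℝ ι) (s : Finset α) :
    ‖coordVariation γ s‖ ≤ (eVariationOn γ s).toReal := by
  classical
  induction s using Finset.induction_on_max with
  | empty => simp [coordVariation, ← Pi.zero_def]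
  | insert a s has ih =>
    rcases s.eq_empty_or_nonempty with rfl | hne
    · simp [coordVariation, eVariationOn.subsingleton, ← Pi.zero_def]
    have hm := s.isGreatest_max' hne
    have hma := (has _ (s.max'_mem hne)).le
    have hsplit : coordVariation γ ↑(insert a s) = coordVariation γ s
        + WithLp.toLp 2 fun i => dist (γ (s.max' hne) i) (γ a i) := by
      ext i
      simp only [coordVariation, Finset.coe_insert, PiLp.add_apply]
      exact eVariationOn.toReal_insert_of_isGreatest (.of_finite _ _) hm hma
    rw [hsplit, Finset.coe_insert,
      eVariationOn.toReal_insert_of_isGreatest (.of_finite _ _) hm hma]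
    exact (norm_add_le _ _).trans (add_le_add ih (norm_toLp_dist_apply _ _).le)

theorem sq_toReal_eVariationOn_add_sq_le (γ : α → EuclideanSpace ℝ (Fin 2)) {s : Set α}
    (hγ : BoundedVariationOn γ s) {S : Finset α} (hS : ↑S ⊆ s) :
    (eVariationOn (fun t => γ t 0) S).toReal ^ 2 + (eVariationOn (fun t => γ t 1) S).toReal ^ 2
      ≤ (eVariationOn γ s).toReal ^ 2 :=
  calc _ = ‖coordVariation γ S‖ ^ 2 := by
        simp [EuclideanSpace.norm_sq_eq, Fin.sum_univ_two, coordVariation]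
    _ ≤ (eVariationOn γ s).toReal ^ 2 := by
        gcongr
        exact (norm_coordVariation_le γ S).trans
          (ENNReal.toReal_mono hγ (eVariationOn.mono γ hS))

end CoordVariation

theorem Real.dist_le_sSup_sub_sInf {s : Set ℝ} (hs : Bornology.IsBounded s) {a b : ℝ}
    (ha : a ∈ s) (hb : b ∈ s) : dist a b ≤ sSup s - sInf s :=
  Real.diam_eq hs ▸ Metric.dist_le_diam_of_mem hs ha hb

theorem IsCompact.exists_sSup_image_sub_sInf_image_eq {α : Type*} [TopologicalSpace α]
    {K : Set α} (hK : IsCompact K) (hne : K.Nonempty) {f : α → ℝ} (hf : ContinuousOn f K) :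
    ∃ p ∈ K, ∃ q ∈ K, sSup (f '' K) - sInf (f '' K) = f q - f p := by
  obtain ⟨p, hp, hfp⟩ := (hK.image_of_continuousOn hf).sInf_mem (hne.image f)
  obtain ⟨q, hq, hfq⟩ := (hK.image_of_continuousOn hf).sSup_mem (hne.image f)
  exact ⟨p, hp, q, hq, by rw [hfp, hfq]⟩

/-- For a curve `γ : [0,1] → ℝ²` of finite length `L` whose endpoints
`a = γ(0)` and `b = γ(1)` have equal `y`-coordinates, the width `w` and height `h` of the
axis-aligned bounding box of the image of `γ` satisfy `(2w − |a − b|)² + 4h² ≤ L²`, and in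
particular `w² + 4h² ≤ L²`. -/
theorem stmt_4 (γ : ℝ → EuclideanSpace ℝ (Fin 2)) (L w h : ℝ)
    (hcont : ContinuousOn γ (Set.Icc 0 1))
    (hfin : eVariationOn γ (Set.Icc 0 1) ≠ ⊤)
    (hL : L = (eVariationOn γ (Set.Icc 0 1)).toReal)
    (hend : γ 0 1 = γ 1 1)
    (hw : w = sSup ((fun t => γ t 0) '' Set.Icc 0 1) - sInf ((fun t => γ t 0) '' Set.Icc 0 1))
    (hh : h = sSup ((fun t => γ t 1) '' Set.Icc 0 1) - sInf ((fun t => γ t 1) '' Set.Icc 0 1)) :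
    (2 * w - dist (γ 0) (γ 1)) ^ 2 + 4 * h ^ 2 ≤ L ^ 2 ∧
      w ^ 2 + 4 * h ^ 2 ≤ L ^ 2 := by
  set x : ℝ → ℝ := fun t => γ t 0
  set y : ℝ → ℝ := fun t => γ t 1
  have hxc : ContinuousOn x (Icc 0 1) := (PiLp.continuous_apply 2 _ 0).comp_continuousOn hcont
  have hyc : ContinuousOn y (Icc 0 1) := (PiLp.continuous_apply 2 _ 1).comp_continuousOn hcont
  have h0 : (0 : ℝ) ∈ Icc 0 1 := left_mem_Icc.2 zero_le_one
  have h1 : (1 : ℝ) ∈ Icc 0 1 := right_mem_Icc.2 zero_le_one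
  obtain ⟨p, hp, q, hq, hwpq⟩ :=
    isCompact_Icc.exists_sSup_image_sub_sInf_image_eq ⟨0, h0⟩ hxc
  obtain ⟨p', hp', q', hq', hhpq⟩ :=
    isCompact_Icc.exists_sSup_image_sub_sInf_image_eq ⟨0, h0⟩ hyc
  have hdist : dist (γ 0) (γ 1) = dist (x 0) (x 1) := by
    simp [EuclideanSpace.dist_eq, Fin.sum_univ_two, x, hend]
  have hdw : dist (γ 0) (γ 1) ≤ w :=
    hdist ▸ hw ▸ Real.dist_le_sSup_sub_sInf (isCompact_Icc.image_of_continuousOn hxc).isBounded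
      (mem_image_of_mem x h0) (mem_image_of_mem x h1)
  have hd : 0 ≤ dist (γ 0) (γ 1) := dist_nonneg
  have hh0 : 0 ≤ h :=
    hh ▸ dist_nonneg.trans (Real.dist_le_sSup_sub_sInf
      (isCompact_Icc.image_of_continuousOn hyc).isBounded
      (mem_image_of_mem y h0) (mem_image_of_mem y h0))
  set S : Finset ℝ := {0, 1, p, q, p', q'}
  have hx : 2 * w - dist (γ 0) (γ 1) ≤ (eVariationOn x S).toReal := by
    rw [hw, hwpq, hdist]
    exact (BoundedVariationOn.of_finite x S).two_mul_sub_sub_dist_le (by simp [S]) (by simp [S])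
      (by simp [S]) (by simp [S]) hp.1 hp.2 hq.1 hq.2
  have hy : 2 * h ≤ (eVariationOn y S).toReal := by
    have := (BoundedVariationOn.of_finite y S).two_mul_sub_sub_dist_le (by simp [S]) (by simp [S])
      (by simp [S]) (by simp [S]) hp'.1 hp'.2 hq'.1 hq'.2
    rwa [← hhpq, ← hh, show y 0 = y 1 from hend, dist_self, sub_zero] at this
  have hmain : (2 * w - dist (γ 0) (γ 1)) ^ 2 + 4 * h ^ 2 ≤ L ^ 2 :=
    calc _ = (2 * w - dist (γ 0) (γ 1)) ^ 2 + (2 * h) ^ 2 := by ring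
      _ ≤ (eVariationOn x S).toReal ^ 2 + (eVariationOn y S).toReal ^ 2 := by
        gcongr; linarith
      _ ≤ L ^ 2 :=
        hL ▸ sq_toReal_eVariationOn_add_sq_le γ hfin (by simp [S, insert_subset_iff, *])
  exact ⟨hmain, le_trans (by gcongr <;> linarith) hmain⟩
end

section
/- Let γ be the polygonal path in ℝ² consisting of the two unit segments from a = (0,0) to c = (2/√5, 1/√5) and from c to b = (4/√5, 0), i.e., the set [a,c] ∪ [c,b] (a curve of length 2 formed by the two equal sides of an isosceles triangle with sides 1, 1, and 4/√5). Then every rectangle Q containing γ satisfies per(Q) ≥ 2√5; that is, the bound per(Q) ≤ √5 · len(γ) is attained and cannot be improved. -/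
/-!
Pull the three vertices `a, c, b` back along the isometry to points `A, C, B` of the box
`[0,w] × [0,h]`. With `u = B - A` and `m = C - (A + B)/2`, the triangle being isosceles with height
a quarter of its base means `m ⟂ u` and `|m| = |u|/4`, so in the plane `m = ±(-u₁, u₀)/4`.
Projecting `A, C, B` to the first axis gives `w ≥ |u₀|` and `w ≥ |u₀|/2 + |m₀| = |u₀|/2 + |u₁|/4`,
and similarly `h ≥ |u₁|`, `h ≥ |u₁|/2 + |u₀|/4`. Under `u₀² + u₁² = 16/5` these force
`w + h ≥ √5`, with equality for `u₁ = 0`.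
-/

open Set

section LinearOrderedField

variable {K : Type*} [Field K] [LinearOrder K] [IsStrictOrderedRing K]

lemma abs_add_abs_le_of_abs_add_le_of_abs_sub_le {a b r : K} (h₁ : |a + b| ≤ r)
    (h₂ : |a - b| ≤ r) : |a| + |b| ≤ r := by
  obtain ⟨p₁, p₂⟩ := abs_le.mp h₁
  obtain ⟨q₁, q₂⟩ := abs_le.mp h₂
  rcases abs_cases a with ⟨ha, _⟩ | ⟨ha, _⟩ <;>
    rcases abs_cases b with ⟨hb, _⟩ | ⟨hb, _⟩ <;> linarith

lemma abs_sub_div_two_add_abs_sub_midpoint_le {a b c w : K} (ha : a ∈ Icc 0 w)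
    (hb : b ∈ Icc 0 w) (hc : c ∈ Icc 0 w) : |b - a| / 2 + |c - (a + b) / 2| ≤ w := by
  have hca : |(b - a) / 2 + (c - (a + b) / 2)| ≤ w := by
    rw [show (b - a) / 2 + (c - (a + b) / 2) = c - a by ring]
    exact abs_sub_le_of_nonneg_of_le hc.1 hc.2 ha.1 ha.2
  have hbc : |(b - a) / 2 - (c - (a + b) / 2)| ≤ w := by
    rw [show (b - a) / 2 - (c - (a + b) / 2) = b - c by ring]
    exact abs_sub_le_of_nonneg_of_le hb.1 hb.2 hc.1 hc.2
  simpa [abs_div] using abs_add_abs_le_of_abs_add_le_of_abs_sub_le hca hbc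

end LinearOrderedField

lemma sq_apex_sub_midpoint_eq {a₀ a₁ b₀ b₁ c₀ c₁ : ℝ}
    (hac : (a₀ - c₀) ^ 2 + (a₁ - c₁) ^ 2 = 1) (hcb : (c₀ - b₀) ^ 2 + (c₁ - b₁) ^ 2 = 1)
    (hab : (a₀ - b₀) ^ 2 + (a₁ - b₁) ^ 2 = 16 / 5) :
    (c₀ - (a₀ + b₀) / 2) ^ 2 = ((b₁ - a₁) / 4) ^ 2 := by
  set u₀ := b₀ - a₀
  set u₁ := b₁ - a₁
  set m₀ := c₀ - (a₀ + b₀) / 2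
  set m₁ := c₁ - (a₁ + b₁) / 2
  have perp : u₀ * m₀ + u₁ * m₁ = 0 := by linear_combination (hac - hcb) / 2
  have norm_m : m₀ ^ 2 + m₁ ^ 2 = 1 / 5 := by linear_combination (hac + hcb) / 2 - hab / 4
  have norm_u : u₀ ^ 2 + u₁ ^ 2 = 16 / 5 := by linear_combination hab
  -- in the plane, `u ⟂ m` gives `m₀² |u|² = u₁² |m|²`
  linear_combination (5 / 16) * ((u₀ * m₀ - u₁ * m₁) * perp - m₀ ^ 2 * norm_u + u₁ ^ 2 * norm_m)

lemma sqrt_five_le_add {w h x y : ℝ} (hx : 0 ≤ x) (hy : 0 ≤ y) (hxy : x ^ 2 + y ^ 2 = 16 / 5)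
    (hxw : x ≤ w) (hyh : y ≤ h) (hw : x / 2 + y / 4 ≤ w) (hh : y / 2 + x / 4 ≤ h) :
    √5 ≤ w + h := by
  suffices ∃ L, 0 ≤ L ∧ L ≤ w + h ∧ 5 ≤ L ^ 2 by
    obtain ⟨L, hL, hLwh, hL5⟩ := this
    exact Real.sqrt_le_iff.mpr ⟨by linarith, by nlinarith⟩
  rcases le_or_gt y (2 * x) with hyx | hyx
  · rcases le_or_gt x (2 * y) with hxy' | hxy'
    · exact ⟨x + y, by positivity, by linarith,
        by nlinarith [mul_nonneg (sub_nonneg.mpr hyx) (sub_nonneg.mpr hxy')]⟩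
    · exact ⟨5 * x / 4 + y / 2, by positivity, by linarith,
        by nlinarith [mul_nonneg hy (sub_pos.mpr hxy').le]⟩
  · exact ⟨5 * y / 4 + x / 2, by positivity, by linarith,
      by nlinarith [mul_nonneg hx (sub_pos.mpr hyx).le]⟩

lemma dist_sq_eq_fin_two (p q : EuclideanSpace ℝ (Fin 2)) :
    dist p q ^ 2 = (p 0 - q 0) ^ 2 + (p 1 - q 1) ^ 2 := by
  simp [EuclideanSpace.dist_sq_eq, Fin.sum_univ_two, Real.dist_eq, sq_abs]

lemma sqrt_five_le_add_of_mem_box {w h : ℝ} {A B C : EuclideanSpace ℝ (Fin 2)}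
    (hA : A 0 ∈ Icc 0 w ∧ A 1 ∈ Icc 0 h) (hB : B 0 ∈ Icc 0 w ∧ B 1 ∈ Icc 0 h)
    (hC : C 0 ∈ Icc 0 w ∧ C 1 ∈ Icc 0 h)
    (hAC : dist A C = 1) (hCB : dist C B = 1) (hAB : dist A B = 4 / √5) :
    √5 ≤ w + h := by
  have hAC' : (A 0 - C 0) ^ 2 + (A 1 - C 1) ^ 2 = 1 := by
    rw [← dist_sq_eq_fin_two, hAC, one_pow]
  have hCB' : (C 0 - B 0) ^ 2 + (C 1 - B 1) ^ 2 = 1 := by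
    rw [← dist_sq_eq_fin_two, hCB, one_pow]
  have hAB' : (A 0 - B 0) ^ 2 + (A 1 - B 1) ^ 2 = 16 / 5 := by
    rw [← dist_sq_eq_fin_two, hAB, div_pow, Real.sq_sqrt (by norm_num)]
    norm_num
  have apex₀ := sq_apex_sub_midpoint_eq hAC' hCB' hAB'
  have apex₁ := sq_apex_sub_midpoint_eq (a₀ := A 1) (a₁ := A 0) (b₀ := B 1) (b₁ := B 0)
    (c₀ := C 1) (c₁ := C 0) (by linarith) (by linarith) (by linarith)
  rw [sq_eq_sq_iff_abs_eq_abs, abs_div, abs_of_pos (four_pos : (0 : ℝ) < 4)] at apex₀ apex₁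
  have width₀ := abs_sub_div_two_add_abs_sub_midpoint_le hA.1 hB.1 hC.1
  have width₁ := abs_sub_div_two_add_abs_sub_midpoint_le hA.2 hB.2 hC.2
  refine sqrt_five_le_add (abs_nonneg (B 0 - A 0)) (abs_nonneg (B 1 - A 1)) ?_
    (abs_sub_le_of_nonneg_of_le hB.1.1 hB.1.2 hA.1.1 hA.1.2)
    (abs_sub_le_of_nonneg_of_le hB.2.1 hB.2.2 hA.2.1 hA.2.2) (by linarith) (by linarith)
  rw [sq_abs, sq_abs]
  linarith

theorem stmt_5_general (w h : ℝ)
    (Q : Set (EuclideanSpace ℝ (Fin 2)))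
    (f : EuclideanSpace ℝ (Fin 2) → EuclideanSpace ℝ (Fin 2))
    (hf : Isometry f)
    (hQ : Q = f '' {p : EuclideanSpace ℝ (Fin 2) | p 0 ∈ Set.Icc 0 w ∧ p 1 ∈ Set.Icc 0 h})
    (hsub : segment ℝ (!₂[0, 0] : EuclideanSpace ℝ (Fin 2))
          !₂[2 / Real.sqrt 5, 1 / Real.sqrt 5] ∪
        segment ℝ (!₂[2 / Real.sqrt 5, 1 / Real.sqrt 5] : EuclideanSpace ℝ (Fin 2))
          !₂[4 / Real.sqrt 5, 0] ⊆ Q) :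
    2 * (w + h) ≥ 2 * Real.sqrt 5 := by
  subst hQ
  obtain ⟨A, hA, hfA⟩ := hsub (Or.inl (left_mem_segment ℝ _ _))
  obtain ⟨C, hC, hfC⟩ := hsub (Or.inl (right_mem_segment ℝ _ _))
  obtain ⟨B, hB, hfB⟩ := hsub (Or.inr (right_mem_segment ℝ _ _))
  have h5 : √5 ^ 2 = 5 := Real.sq_sqrt (by norm_num)
  have hAC : dist A C = 1 := by
    rw [← hf.dist_eq, hfA, hfC, EuclideanSpace.dist_eq]
    simp [Fin.sum_univ_two, Real.dist_eq, sq_abs, div_pow, h5]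
    norm_num
  have hCB : dist C B = 1 := by
    rw [← hf.dist_eq, hfC, hfB, EuclideanSpace.dist_eq]
    simp [Fin.sum_univ_two, Real.dist_eq, sq_abs, div_sub_div_same, div_pow, h5]
    norm_num
  have hAB : dist A B = 4 / √5 := by
    rw [← hf.dist_eq, hfA, hfB, EuclideanSpace.dist_eq]
    simp [Fin.sum_univ_two, Real.dist_eq, sq_abs, div_pow, h5]
  linarith [sqrt_five_le_add_of_mem_box hA hB hC hAC hCB hAB]

/-- Tightness of the bound in Lemma 5: for the polygonal path
`γ = [a,c] ∪ [c,b]` with `a = (0,0)`, `c = (2/√5, 1/√5)`, `b = (4/√5, 0)` (the two unit sides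
of an isosceles triangle with sides `1`, `1`, `4/√5`, so a curve of length `2`), every
rectangle containing `γ` has perimeter at least `2√5 = √5 · len(γ)`. -/
theorem stmt_5 (w h : ℝ) (hw : 0 ≤ w) (hh : 0 ≤ h)
    (Q : Set (EuclideanSpace ℝ (Fin 2)))
    (f : EuclideanSpace ℝ (Fin 2) → EuclideanSpace ℝ (Fin 2))
    (hf : Isometry f)
    (hQ : Q = f '' {p : EuclideanSpace ℝ (Fin 2) | p 0 ∈ Set.Icc 0 w ∧ p 1 ∈ Set.Icc 0 h})
    (hsub : segment ℝ (!₂[0, 0] : EuclideanSpace ℝ (Fin 2))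
          !₂[2 / Real.sqrt 5, 1 / Real.sqrt 5] ∪
        segment ℝ (!₂[2 / Real.sqrt 5, 1 / Real.sqrt 5] : EuclideanSpace ℝ (Fin 2))
          !₂[4 / Real.sqrt 5, 0] ⊆ Q) :
    2 * (w + h) ≥ 2 * Real.sqrt 5 :=
  stmt_5_general w h Q f hf hQ hsub
end

section
/- Let 𝓛 be a set of lines in ℝ² and let γ : [0,1] → ℝ² be a curve of finite length L such that every line in 𝓛 intersects the image of γ. Then there exist a rectangle Q with side lengths w ≥ h and three of its closed sides s₁, s₂, s₃ (the two short sides and one long side) such that every line in 𝓛 intersects s₁ ∪ s₂ ∪ s₃ and the total length of these three sides satisfies w + 2h ≤ √2 · L; in particular, there is a polygonal path of length at most √2 · L visiting every line in 𝓛. -/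
/-!
Rotate coordinates so that the chord from `γ 0` to `γ 1` is horizontal and enclose the curve in its
bounding box `w × h` in these coordinates. The `x`-coordinate of `γ` varies by at least `w`; the
`y`-coordinate returns to its initial value, so it varies by at least `2h`. Since
`|Δx| + |Δy| ≤ √2 · |Δγ|`, this gives `w + 2h ≤ √2 · L`. Every line meeting the curve meets the
box, and a line meeting a rectangle meets any three of its sides; if `h > w` we exchange the roles
of the two axes, which only improves the bound.
-/

open Set

open scoped ENNReal

namespace eVariationOn

variable {α E F G : Type*} [LinearOrder α] [PseudoEMetricSpace E] [PseudoEMetricSpace F]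
  [PseudoEMetricSpace G]

theorem add_le_mul_of_finset {f : α → E} {g : α → F} {φ : α → G} {C : ℝ≥0∞} (T : Finset α)
    (h : ∀ x ∈ T, ∀ y ∈ T, edist (f x) (f y) + edist (g x) (g y) ≤ C * edist (φ x) (φ y)) :
    eVariationOn f T + eVariationOn g T ≤ C * eVariationOn φ T := by
  induction T using Finset.induction_on_max with
  | empty => simp
  | insert a T hlt ih =>
    rcases T.eq_empty_or_nonempty with rfl | hne
    · simp
    set x := T.max' hne
    have hx : IsGreatest (T : Set α) x := ⟨T.max'_mem hne, fun y hy => T.le_max' y hy⟩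
    have hxa : IsLeast ({x, a} : Set α) x :=
      ⟨by simp, by simpa using (hlt x (T.max'_mem hne)).le⟩
    have hins : ((insert a T : Finset α) : Set α) = (T : Set α) ∪ {x, a} := by
      rw [Finset.coe_insert, union_insert, union_singleton,
      insert_eq_of_mem (mem_insert_of_mem a hx.1)]
    have hT : ∀ y ∈ T, y ∈ insert a T := fun y hy => Finset.mem_insert_of_mem hy
    rw [hins, union f hx hxa, union g hx hxa, union φ hx hxa, pair, pair, pair, mul_add]
    calc eVariationOn f T + edist (f x) (f a) + (eVariationOn g T + edist (g x) (g a))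
        = (eVariationOn f T + eVariationOn g T) + (edist (f x) (f a) + edist (g x) (g a)) := by
          ring
      _ ≤ _ := add_le_add (ih fun y hy z hz => h y (hT y hy) z (hT z hz))
          (h x (hT x (T.max'_mem hne)) a (Finset.mem_insert_self a T))

theorem add_le_mul {f : α → E} {g : α → F} {φ : α → G} {C : ℝ≥0∞} {s : Set α}
    (h : ∀ x ∈ s, ∀ y ∈ s, edist (f x) (f y) + edist (g x) (g y) ≤ C * edist (φ x) (φ y)) :
    eVariationOn f s + eVariationOn g s ≤ C * eVariationOn φ s := by
  classical
  rcases s.eq_empty_or_nonempty with rfl | hs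
  · simp
  have := nonempty_monotone_mem hs
  refine ENNReal.iSup_add_iSup_le fun ⟨n, u, hu, us⟩ ⟨m, v, hv, vs⟩ => ?_
  set T : Finset α := (Finset.range (n + 1)).image u ∪ (Finset.range (m + 1)).image v
  have hTs : (T : Set α) ⊆ s := by
    intro x hx
    simp only [T, Finset.coe_union, Finset.coe_image, mem_union, mem_image] at hx
    obtain ⟨i, -, rfl⟩ | ⟨i, -, rfl⟩ := hx
    exacts [us i, vs i]
  have hu' : ∑ i ∈ Finset.range n, edist (f (u (i + 1))) (f (u i)) ≤ eVariationOn f T := by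
    rw [Finset.range_eq_Ico]
    exact sum_le_of_monotoneOn_Icc (hu.monotoneOn _) fun i hi =>
      Finset.mem_union_left _ (Finset.mem_image_of_mem u (Finset.mem_range_succ_iff.2 hi.2))
  have hv' : ∑ i ∈ Finset.range m, edist (g (v (i + 1))) (g (v i)) ≤ eVariationOn g T := by
    rw [Finset.range_eq_Ico]
    exact sum_le_of_monotoneOn_Icc (hv.monotoneOn _) fun i hi =>
      Finset.mem_union_right _ (Finset.mem_image_of_mem v (Finset.mem_range_succ_iff.2 hi.2))
  calc _ ≤ eVariationOn f T + eVariationOn g T := add_le_add hu' hv'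
    _ ≤ C * eVariationOn φ T :=
      add_le_mul_of_finset T fun x hx y hy => h x (hTs hx) y (hTs hy)
    _ ≤ C * eVariationOn φ s := by gcongr; exact mono φ hTs

theorem two_mul_edist_le_of_eq {f : α → E} {a b x y : α} (hab : f a = f b) (hx : x ∈ Icc a b)
    (hy : y ∈ Icc a b) : 2 * edist (f x) (f y) ≤ eVariationOn f (Icc a b) := by
  wlog hxy : x ≤ y generalizing x y
  · rw [edist_comm]
    exact this hy hx (le_of_not_ge hxy)
  have hsplit : eVariationOn f (Icc a x) + eVariationOn f (Icc x y) + eVariationOn f (Icc y b) =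
      eVariationOn f (Icc a b) := by
    have h₁ := Icc_add_Icc f (s := univ) hx.1 hxy (mem_univ _)
    have h₂ := Icc_add_Icc f (s := univ) (hx.1.trans hxy) hy.2 (mem_univ _)
    simp only [univ_inter] at h₁ h₂
    rw [h₁, h₂]
  calc 2 * edist (f x) (f y) = edist (f x) (f y) + edist (f x) (f y) := two_mul _
    _ ≤ edist (f x) (f a) + edist (f a) (f y) + edist (f x) (f y) := by
      gcongr; exact edist_triangle _ _ _
    _ = edist (f a) (f x) + edist (f x) (f y) + edist (f y) (f b) := by
      rw [← hab, edist_comm (f x) (f a), edist_comm (f a) (f y)]; ring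
    _ ≤ _ := hsplit ▸ add_le_add
        (add_le_add (edist_le f (left_mem_Icc.2 hx.1) (right_mem_Icc.2 hx.1))
          (edist_le f (left_mem_Icc.2 hxy) (right_mem_Icc.2 hxy)))
        (edist_le f (left_mem_Icc.2 hy.2) (right_mem_Icc.2 hy.2))

end eVariationOn

theorem IsCompact.exists_forall_mem_Icc {α : Type*} [TopologicalSpace α] {K : Set α} {f : α → ℝ}
    (hK : IsCompact K) (hne : K.Nonempty) (hf : ContinuousOn f K) :
    ∃ s ∈ K, ∃ t ∈ K, ∀ u ∈ K, f u ∈ Icc (f s) (f t) := by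
  obtain ⟨s, hs, hmin⟩ := hK.exists_isMinOn hne hf
  obtain ⟨t, ht, hmax⟩ := hK.exists_isMaxOn hne hf
  exact ⟨s, hs, t, ht, fun u hu => ⟨hmin hu, hmax hu⟩⟩

theorem EuclideanSpace.abs_add_abs_le_sqrt_two_mul_norm (v : EuclideanSpace ℝ (Fin 2)) :
    |v 0| + |v 1| ≤ √2 * ‖v‖ := by
  rw [EuclideanSpace.norm_eq, Fin.sum_univ_two, Real.norm_eq_abs, Real.norm_eq_abs,
    ← Real.sqrt_mul zero_le_two]
  apply Real.le_sqrt_of_sq_le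
  nlinarith [sq_nonneg (|v 0| - |v 1|)]

def threeSides (w h : ℝ) : Set (EuclideanSpace ℝ (Fin 2)) :=
  {p | p 0 = 0 ∧ p 1 ∈ Icc 0 h} ∪ {p | p 0 = w ∧ p 1 ∈ Icc 0 h} ∪ {p | p 0 ∈ Icc 0 w ∧ p 1 = 0}

theorem exists_add_smul_mem_threeSides {w h : ℝ} {q d : EuclideanSpace ℝ (Fin 2)}
    (hq₀ : q 0 ∈ Icc 0 w) (hq₁ : q 1 ∈ Icc 0 h) (hd : d ≠ 0) :
    ∃ t : ℝ, q + t • d ∈ threeSides w h := by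
  simp only [threeSides, mem_union, mem_ofPred_eq, PiLp.add_apply, PiLp.smul_apply, smul_eq_mul]
  by_cases hd₁ : d 1 = 0
  · have hd₀ : d 0 ≠ 0 := fun hd₀ => hd (by ext i; fin_cases i <;> simp [hd₀, hd₁])
    exact ⟨-q 0 / d 0, Or.inl (Or.inl ⟨by field_simp; ring, by simpa [hd₁] using hq₁⟩)⟩
  set t₀ := -q 1 / d 1
  set x₀ := q 0 + t₀ * d 0
  have hy₀ : q 1 + t₀ * d 1 = 0 := by simp only [t₀]; field_simp; ring
  by_cases hx₀ : x₀ ∈ Icc 0 w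
  · exact ⟨t₀, Or.inr ⟨hx₀, hy₀⟩⟩
  -- the line meets the `x`-axis outside the box, so it leaves the box through a vertical side
  obtain ⟨c, hc, hcx⟩ : ∃ c, (c = 0 ∨ c = w) ∧ c ∈ segment ℝ (q 0) x₀ := by
    rw [segment_eq_uIcc]
    rw [mem_Icc, not_and_or, not_le, not_le] at hx₀
    rcases hx₀ with hlt | hlt
    · exact ⟨0, Or.inl rfl, mem_uIcc.2 (Or.inr ⟨hlt.le, hq₀.1⟩)⟩
    · exact ⟨w, Or.inr rfl, mem_uIcc.2 (Or.inl ⟨hq₀.2, hlt.le⟩)⟩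
  obtain ⟨a, θ, ha, hθ, haθ, hcomb⟩ := hcx
  have hx : q 0 + θ * t₀ * d 0 = c := by
    rw [← hcomb, smul_eq_mul, smul_eq_mul]; linear_combination (-q 0) * haθ
  have hy : q 1 + θ * t₀ * d 1 ∈ Icc 0 h := by
    have : q 1 + θ * t₀ * d 1 = a * q 1 := by linear_combination θ * hy₀ - q 1 * haθ
    rw [this]
    exact ⟨mul_nonneg ha hq₁.1, by nlinarith [hq₁.1, hq₁.2]⟩
  rcases hc with rfl | rfl
  exacts [⟨θ * t₀, Or.inl (Or.inl ⟨hx, hy⟩)⟩, ⟨θ * t₀, Or.inl (Or.inr ⟨hx, hy⟩)⟩]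

section

variable {E : Type*} [NormedAddCommGroup E] [InnerProductSpace ℝ E]

theorem exists_orthonormalBasis_repr_eq_zero [FiniteDimensional ℝ E]
    (hE : Module.finrank ℝ E = 2) (x : E) :
    ∃ e : OrthonormalBasis (Fin 2) ℝ E, e.repr x 1 = 0 := by
  rcases eq_or_ne x 0 with rfl | hx
  · exact ⟨(stdOrthonormalBasis ℝ E).reindex (finCongr hE), by simp⟩
  have hunit : Orthonormal ℝ (({0} : Set (Fin 2)).domRestrict fun _ => ‖x‖⁻¹ • x) := by
    refine ⟨fun _ => norm_smul_inv_norm hx, fun i j hij => absurd (Subsingleton.elim i j) hij⟩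
  obtain ⟨e, he⟩ := hunit.exists_orthonormalBasis_extension_of_card_eq (by simpa using hE)
  refine ⟨e, ?_⟩
  have : x = ‖x‖ • e 0 := by rw [he 0 rfl, smul_inv_smul₀ (norm_ne_zero_iff.2 hx)]
  rw [e.repr_apply_apply, this, inner_smul_right, e.orthonormal.inner_eq_zero (by decide), mul_zero]

namespace OrthonormalBasis

theorem eVariationOn_repr_add_le {α : Type*} [LinearOrder α] (e : OrthonormalBasis (Fin 2) ℝ E)
    (γ : α → E) (s : Set α) :
    eVariationOn (fun t => e.repr (γ t) 0) s + eVariationOn (fun t => e.repr (γ t) 1) s ≤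
      ENNReal.ofReal √2 * eVariationOn γ s := by
  refine eVariationOn.add_le_mul fun x _ y _ => ?_
  simp only [edist_dist, Real.dist_eq]
  rw [← ENNReal.ofReal_add (abs_nonneg _) (abs_nonneg _), ← ENNReal.ofReal_mul (by positivity)]
  gcongr
  have := EuclideanSpace.abs_add_abs_le_sqrt_two_mul_norm (e.repr (γ x - γ y))
  rwa [LinearIsometryEquiv.norm_map, ← dist_eq_norm, map_sub] at this

theorem abs_sub_add_two_mul_abs_sub_le (e : OrthonormalBasis (Fin 2) ℝ E) {γ : ℝ → E}
    (hγ : eVariationOn γ (Icc 0 1) ≠ ⊤) (hclosed : e.repr (γ 0) 1 = e.repr (γ 1) 1)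
    {s t s' t' : ℝ} (hs : s ∈ Icc 0 1) (ht : t ∈ Icc 0 1) (hs' : s' ∈ Icc 0 1)
    (ht' : t' ∈ Icc 0 1) :
    |e.repr (γ t) 0 - e.repr (γ s) 0| + 2 * |e.repr (γ t') 1 - e.repr (γ s') 1| ≤
      √2 * (eVariationOn γ (Icc 0 1)).toReal := by
  have hX := eVariationOn.edist_le (fun t => e.repr (γ t) 0) ht hs
  have hY := eVariationOn.two_mul_edist_le_of_eq (f := fun t => e.repr (γ t) 1) hclosed ht' hs'
  simp only [edist_dist, Real.dist_eq] at hX hY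
  rw [← ENNReal.toReal_ofReal (Real.sqrt_nonneg 2), ← ENNReal.toReal_mul,
    ← ENNReal.ofReal_le_iff_le_toReal (ENNReal.mul_ne_top ENNReal.ofReal_ne_top hγ),
    ENNReal.ofReal_add (abs_nonneg _) (by positivity), ENNReal.ofReal_mul zero_le_two,
    ENNReal.ofReal_ofNat]
  exact (add_le_add hX hY).trans (e.eVariationOn_repr_add_le γ _)

theorem exists_isometry_threeSides (e : OrthonormalBasis (Fin 2) ℝ E) {K : Set E}
    {x₀ y₀ w h : ℝ} (hK : ∀ p ∈ K, e.repr p 0 ∈ Icc x₀ (x₀ + w) ∧ e.repr p 1 ∈ Icc y₀ (y₀ + h)) :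
    ∃ f : EuclideanSpace ℝ (Fin 2) → E, Isometry f ∧
      ∀ ℓ : AffineSubspace ℝ E, ℓ.direction ≠ ⊥ → ((ℓ : Set E) ∩ K).Nonempty →
        ((ℓ : Set E) ∩ f '' threeSides w h).Nonempty := by
  set c : EuclideanSpace ℝ (Fin 2) := !₂[x₀, y₀]
  refine ⟨fun v => e.repr.symm (v + c), e.repr.symm.isometry.comp (isometry_add_right c), ?_⟩
  rintro ℓ hℓ ⟨q, hqℓ, hqK⟩
  obtain ⟨D, hDℓ, hD⟩ := Submodule.exists_mem_ne_zero_of_ne_bot hℓ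
  obtain ⟨hq₀, hq₁⟩ := hK q hqK
  obtain ⟨t, ht⟩ := exists_add_smul_mem_threeSides (q := e.repr q - c) (d := e.repr D)
    (w := w) (h := h)
    (by simp [c]; constructor <;> linarith [hq₀.1, hq₀.2])
    (by simp [c]; constructor <;> linarith [hq₁.1, hq₁.2])
    (by simpa using hD)
  refine ⟨t • D + q, ?_, _, ht, ?_⟩
  · exact AffineSubspace.vadd_mem_of_mem_direction (ℓ.direction.smul_mem t hDℓ) hqℓ
  · simp only [map_add, map_sub, map_smul, LinearIsometryEquiv.symm_apply_apply]
    abel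

end OrthonormalBasis

theorem exists_bounding_box_width_add_two_mul_height_le [FiniteDimensional ℝ E]
    (hE : Module.finrank ℝ E = 2) {γ : ℝ → E} (hcont : ContinuousOn γ (Icc 0 1))
    (hfin : eVariationOn γ (Icc 0 1) ≠ ⊤) :
    ∃ (e : OrthonormalBasis (Fin 2) ℝ E) (x₀ y₀ w h : ℝ), 0 ≤ w ∧ 0 ≤ h ∧
      w + 2 * h ≤ √2 * (eVariationOn γ (Icc 0 1)).toReal ∧
      ∀ p ∈ γ '' Icc 0 1, e.repr p 0 ∈ Icc x₀ (x₀ + w) ∧ e.repr p 1 ∈ Icc y₀ (y₀ + h) := by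
  obtain ⟨e, he⟩ := exists_orthonormalBasis_repr_eq_zero hE (γ 1 - γ 0)
  have hclosed : e.repr (γ 0) 1 = e.repr (γ 1) 1 := by
    rw [map_sub, PiLp.sub_apply, sub_eq_zero] at he
    exact he.symm
  have hne : (Icc (0 : ℝ) 1).Nonempty := nonempty_Icc.2 zero_le_one
  obtain ⟨s, hs, t, ht, hX⟩ :=
    isCompact_Icc.exists_forall_mem_Icc hne (f := fun u => e.repr (γ u) 0) (by fun_prop)
  obtain ⟨s', hs', t', ht', hY⟩ :=
    isCompact_Icc.exists_forall_mem_Icc hne (f := fun u => e.repr (γ u) 1) (by fun_prop)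
  set w := e.repr (γ t) 0 - e.repr (γ s) 0
  set h := e.repr (γ t') 1 - e.repr (γ s') 1
  refine ⟨e, e.repr (γ s) 0, e.repr (γ s') 1, w, h, sub_nonneg.2 (hX s hs).2,
    sub_nonneg.2 (hY s' hs').2, ?_, ?_⟩
  · have := e.abs_sub_add_two_mul_abs_sub_le hfin hclosed hs ht hs' ht'
    linarith [le_abs_self w, le_abs_self h]
  · rintro _ ⟨u, hu, rfl⟩
    simpa [w, h] using ⟨hX u hu, hY u hu⟩

end

/-- If every line of a set `𝓛` of lines in `ℝ²` intersects the image of a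
curve `γ` of finite length `L`, then there are a rectangle with side lengths `w ≥ h ≥ 0` and
three of its closed sides (the two short sides and one long side, of total length `w + 2h`)
such that every line of `𝓛` intersects their union and `w + 2h ≤ √2 · L`: a polygonal path
of length at most `√2 · L` visiting every line in `𝓛`. -/
theorem stmt_14 (𝓛 : Set (AffineSubspace ℝ (EuclideanSpace ℝ (Fin 2))))
    (hlines : ∀ ℓ ∈ 𝓛, Module.finrank ℝ (AffineSubspace.direction ℓ) = 1)
    (γ : ℝ → EuclideanSpace ℝ (Fin 2)) (L : ℝ)
    (hcont : ContinuousOn γ (Set.Icc 0 1))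
    (hfin : eVariationOn γ (Set.Icc 0 1) ≠ ⊤)
    (hL : L = (eVariationOn γ (Set.Icc 0 1)).toReal)
    (hvisit : ∀ ℓ ∈ 𝓛, ((ℓ : Set (EuclideanSpace ℝ (Fin 2))) ∩ γ '' Set.Icc 0 1).Nonempty) :
    ∃ (w h : ℝ) (f : EuclideanSpace ℝ (Fin 2) → EuclideanSpace ℝ (Fin 2)),
      0 ≤ h ∧ h ≤ w ∧ Isometry f ∧
      w + 2 * h ≤ Real.sqrt 2 * L ∧
      ∀ ℓ ∈ 𝓛, ((ℓ : Set (EuclideanSpace ℝ (Fin 2))) ∩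
        f '' ({p : EuclideanSpace ℝ (Fin 2) | p 0 = 0 ∧ p 1 ∈ Set.Icc 0 h} ∪
          {p : EuclideanSpace ℝ (Fin 2) | p 0 = w ∧ p 1 ∈ Set.Icc 0 h} ∪
          {p : EuclideanSpace ℝ (Fin 2) | p 0 ∈ Set.Icc 0 w ∧ p 1 = 0})).Nonempty := by
  have hdir : ∀ ℓ ∈ 𝓛, ℓ.direction ≠ ⊥ := fun ℓ hℓ hbot =>
    one_ne_zero ((hlines ℓ hℓ).symm.trans (Submodule.finrank_eq_zero.2 hbot))
  obtain ⟨e, x₀, y₀, w, h, hw, hh, hlen, hbox⟩ :=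
    exists_bounding_box_width_add_two_mul_height_le finrank_euclideanSpace_fin hcont hfin
  rw [← hL] at hlen
  rcases le_total h w with hhw | hwh
  · obtain ⟨f, hf, hcover⟩ := e.exists_isometry_threeSides hbox
    exact ⟨w, h, f, hh, hhw, hf, hlen, fun ℓ hℓ => hcover ℓ (hdir ℓ hℓ) (hvisit ℓ hℓ)⟩
  · obtain ⟨f, hf, hcover⟩ := (e.reindex (Equiv.swap 0 1)).exists_isometry_threeSides
      fun p hp => by simpa using (hbox p hp).symm
    exact ⟨h, w, f, hw, hwh, hf, by linarith, fun ℓ hℓ => hcover ℓ (hdir ℓ hℓ) (hvisit ℓ hℓ)⟩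
end
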